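/- Let (X, Σ, μ) be a measure space with dim L²(X, μ; 𝔽) ≥ 3n. Then the set of continuous frames in L²(X, μ; 𝔽ⁿ) is path-connected (indeed polygonally connected): any two continuous frames u, v can be joined within the frame set by the concatenation of the two line segments from u to a and from a to v, for a suitable continuous frame a. -/

import Mathlib

/-!
By finite-dimensionality of `E`, the lower frame bound of `u` holds as soon as `v ↦ ⟪v, u ·⟫` is
injective, so the continuous frames are exactly the `u` whose components `u^k = ⟪e_k, u ·⟫` are
linearly independent in `L²(μ; 𝕜)`. Given two frames `u` and `v`, the bound `3n ≤ dim L²(μ; 𝕜)`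
leaves room for `n` linearly independent functions `a^k` whose span meets the span of all `u^k`
and `v^k` only in `0`. Then for `t ∈ [0, 1]` the components `(1 - t) u^k + t a^k` of
`(1 - t) u + t a` remain linearly independent, so the segments from `u` to `a` and from `a` to `v`
stay inside the set of frames.
-/

open MeasureTheory Module Submodule Set

section LinearAlgebra

variable {K V : Type*} [Field K] [AddCommGroup V] [Module K V]

theorem LinearIndependent.smul_add_smul {ι : Type*} [Fintype ι] {f g : ι → V}
    (hf : LinearIndependent K f) (hg : LinearIndependent K g)
    (hfg : Disjoint (span K (range f)) (span K (range g))) {c d : K} (hcd : c ≠ 0 ∨ d ≠ 0) :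
    LinearIndependent K fun i => c • f i + d • g i := by
  rw [Fintype.linearIndependent_iff]
  intro l hl i
  have hzero := Fintype.linearIndependent_iff.mp (hf.sum_type hg hfg) (Sum.elim (c • l) (d • l))
    (by simpa [Fintype.sum_sum_type, smul_add, smul_smul, Finset.sum_add_distrib, mul_comm]
      using hl)
  have hc := hzero (.inl i)
  have hd := hzero (.inr i)
  simp only [Sum.elim_inl, Sum.elim_inr, Pi.smul_apply, smul_eq_mul, mul_eq_zero] at hc hd
  tauto

theorem exists_linearIndependent_disjoint {W : Submodule K V} {m n : ℕ}
    (hW : Module.rank K W ≤ m) (hV : ((m + n : ℕ) : Cardinal) ≤ Module.rank K V) :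
    ∃ h : Fin n → V, LinearIndependent K h ∧ Disjoint (span K (range h)) W := by
  obtain ⟨C, hWC⟩ := W.exists_isCompl
  have hC : (n : Cardinal) ≤ Module.rank K C := by
    obtain ⟨k, hkm, hk⟩ := Cardinal.exists_nat_eq_of_le_nat hW
    rw [← (W.quotientEquivOfIsCompl C hWC).rank_eq]
    rw [← W.rank_quotient_add_rank, hk] at hV
    by_contra! hlt
    obtain ⟨l, hl, hq⟩ := Cardinal.exists_nat_eq_of_le_nat hlt.le
    rw [hq] at hV hlt
    norm_cast at hV hlt
    omega
  obtain ⟨h, hli⟩ := exists_linearIndependent_of_le_rank hC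
  refine ⟨C.subtype ∘ h, hli.map' _ C.ker_subtype, hWC.symm.disjoint.mono_left ?_⟩
  rw [span_le]
  rintro _ ⟨i, rfl⟩
  exact (h i).2

theorem rank_span_range_le {ι : Type*} [Fintype ι] (f : ι → V) :
    Module.rank K (span K (range f)) ≤ Fintype.card ι := by
  refine (rank_span_le _).trans ?_
  simpa using Cardinal.mk_range_le_lift (f := f)

end LinearAlgebra

theorem LinearMap.injective_iff_linearIndependent_comp {R S M N ι : Type*} [Fintype ι]
    [Ring R] [Ring S] [AddCommGroup M] [Module R M] [AddCommGroup N] [Module S N]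
    {σ : R →+* S} {σ' : S →+* R} [RingHomInvPair σ σ'] [RingHomInvPair σ' σ]
    (T : M →ₛₗ[σ] N) (b : Basis ι R M) :
    Function.Injective T ↔ LinearIndependent S (T ∘ b) := by
  have hT (c : ι → R) : T (∑ i, c i • b i) = ∑ i, σ (c i) • T (b i) := by
    simp [map_sum, map_smulₛₗ]
  rw [injective_iff_map_eq_zero, Fintype.linearIndependent_iff]
  constructor
  · intro hinj g hg i
    have := hinj (∑ i, σ' (g i) • b i) (by simpa [hT] using hg)
    simpa using congrArg σ (Fintype.linearIndependent_iff.mp b.linearIndependent _ this i)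
  · intro hli v hv
    rw [← b.sum_repr v, hT] at hv
    have hrepr (i : ι) : b.repr v i = 0 := by simpa using congrArg σ' (hli _ hv i)
    simpa [hrepr] using (b.sum_repr v).symm

theorem MeasureTheory.L2.norm_sq_eq_integral_norm_sq {𝕜 X F : Type*} [RCLike 𝕜]
    [MeasurableSpace X] {μ : Measure X} [NormedAddCommGroup F] [InnerProductSpace 𝕜 F]
    (f : Lp F 2 μ) : ‖f‖ ^ 2 = ∫ x, ‖f x‖ ^ 2 ∂μ := by
  rw [@norm_sq_eq_re_inner 𝕜, L2.inner_def, ← integral_re (L2.integrable_inner f f)]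
  simp_rw [← norm_sq_eq_re_inner]

theorem ContinuousLinearMap.exists_pos_mul_norm_le_of_injective {𝕜 E F : Type*} [RCLike 𝕜]
    [NormedAddCommGroup E] [NormedSpace 𝕜 E] [FiniteDimensional 𝕜 E]
    [NormedAddCommGroup F] [NormedSpace 𝕜 F] {σ : 𝕜 →+* 𝕜} [RingHomIsometric σ]
    (T : E →SL[σ] F) (hT : Function.Injective T) : ∃ A > 0, ∀ v, A * ‖v‖ ≤ ‖T v‖ := by
  rcases subsingleton_or_nontrivial E with hE | hE
  · exact ⟨1, one_pos, fun v => by simp [Subsingleton.elim v 0]⟩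
  have := FiniteDimensional.proper_rclike 𝕜 E
  obtain ⟨v₀, hv₀⟩ := exists_ne (0 : E)
  obtain ⟨z, hz, hmin⟩ := (isCompact_sphere (0 : E) 1).exists_isMinOn
    ⟨(‖v₀‖⁻¹ : 𝕜) • v₀, by simp [norm_smul_inv_norm hv₀]⟩
    (continuous_norm.comp T.continuous).continuousOn
  have hz0 : z ≠ 0 := ne_zero_of_mem_unit_sphere ⟨z, hz⟩
  refine ⟨‖T z‖, norm_pos_iff.mpr ((map_ne_zero_iff T hT).mpr hz0), fun v => ?_⟩
  rcases eq_or_ne v 0 with rfl | hv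
  · simp
  have hv' : 0 < ‖v‖ := norm_pos_iff.mpr hv
  have := hmin (a := (‖v‖⁻¹ : 𝕜) • v) (by simp [norm_smul_inv_norm hv])
  simp only [Function.comp_apply, mem_ofPred_eq, map_smulₛₗ, norm_smul, RingHomIsometric.norm_map,
    norm_inv, RCLike.norm_ofReal, abs_norm] at this
  rwa [inv_mul_eq_div, le_div_iff₀ hv'] at this

theorem joinedIn_of_forall_ofReal_smul_add_mem {𝕜 M : Type*} [RCLike 𝕜] [AddCommGroup M]
    [Module 𝕜 M] [TopologicalSpace M] [ContinuousAdd M] [ContinuousSMul 𝕜 M] {S : Set M}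
    {x y : M} (h : ∀ t ∈ unitInterval, ((1 - t : ℝ) : 𝕜) • x + (t : 𝕜) • y ∈ S) :
    JoinedIn S x y :=
  JoinedIn.ofLine (by fun_prop) (by simp) (by simp) (image_subset_iff.mpr h)

section ContinuousFrame

variable {𝕜 X E : Type*} [RCLike 𝕜] [MeasurableSpace X] {μ : Measure X}
  [NormedAddCommGroup E] [InnerProductSpace 𝕜 E]

variable (𝕜) in
def IsContinuousFrame (u : Lp E 2 μ) : Prop :=
  ∃ A B : ℝ, 0 < A ∧ 0 < B ∧ ∀ v : E,
    A * ‖v‖ ^ 2 ≤ ∫ x, ‖(inner 𝕜 v (u x) : 𝕜)‖ ^ 2 ∂μ ∧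
    ∫ x, ‖(inner 𝕜 v (u x) : 𝕜)‖ ^ 2 ∂μ ≤ B * ‖v‖ ^ 2

variable (𝕜 μ) in
noncomputable def analysisOp : Lp E 2 μ →L[𝕜] E →L⋆[𝕜] Lp 𝕜 2 μ :=
  (ContinuousLinearMap.compSL E (E →L[𝕜] 𝕜) (Lp 𝕜 2 μ) (starRingEnd 𝕜) (RingHom.id 𝕜)).flip
      (innerSL 𝕜) ∘L
    (ContinuousLinearMap.compLpL₂ 2 μ (ContinuousLinearMap.id 𝕜 (E →L[𝕜] 𝕜))).flip

theorem analysisOp_apply (u : Lp E 2 μ) (v : E) :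
    analysisOp 𝕜 μ u v = (innerSL 𝕜 v).compLp u := rfl

theorem norm_analysisOp_apply_sq (u : Lp E 2 μ) (v : E) :
    ‖analysisOp 𝕜 μ u v‖ ^ 2 = ∫ x, ‖(inner 𝕜 v (u x) : 𝕜)‖ ^ 2 ∂μ := by
  rw [L2.norm_sq_eq_integral_norm_sq (𝕜 := 𝕜)]
  refine integral_congr_ae ?_
  filter_upwards [(innerSL 𝕜 v).coeFn_compLp u] with x hx
  rw [analysisOp_apply, hx, innerSL_apply_apply]

theorem analysisOp_compLp_toSpanSingleton (e v : E) (f : Lp 𝕜 2 μ) :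
    analysisOp 𝕜 μ ((ContinuousLinearMap.toSpanSingleton 𝕜 e).compLp f) v =
      (inner 𝕜 v e : 𝕜) • f := by
  ext1
  filter_upwards [(innerSL 𝕜 v).coeFn_compLp ((ContinuousLinearMap.toSpanSingleton 𝕜 e).compLp f),
    (ContinuousLinearMap.toSpanSingleton 𝕜 e).coeFn_compLp f, Lp.coeFn_smul (inner 𝕜 v e) f]
    with x h₁ h₂ h₃
  rw [analysisOp_apply, h₁, h₂, h₃]
  simp [mul_comm]

theorem exists_analysisOp_comp_eq {ι : Type*} [Fintype ι] (b : OrthonormalBasis ι 𝕜 E)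
    (f : ι → Lp 𝕜 2 μ) : ∃ u : Lp E 2 μ, analysisOp 𝕜 μ u ∘ b = f := by
  classical
  refine ⟨∑ i, (ContinuousLinearMap.toSpanSingleton 𝕜 (b i)).compLp (f i), funext fun j => ?_⟩
  simp [analysisOp_compLp_toSpanSingleton, b.inner_eq_ite]

theorem isContinuousFrame_iff_injective [FiniteDimensional 𝕜 E] (u : Lp E 2 μ) :
    IsContinuousFrame 𝕜 u ↔ Function.Injective (analysisOp 𝕜 μ u) := by
  simp_rw [IsContinuousFrame, ← norm_analysisOp_apply_sq]
  constructor
  · rintro ⟨A, B, hA, -, hframe⟩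
    refine (injective_iff_map_eq_zero _).mpr fun v hv => ?_
    have hlower := (hframe v).1
    rw [hv, norm_zero, zero_pow two_ne_zero] at hlower
    simpa using nonpos_of_mul_nonpos_right hlower hA
  · intro hinj
    obtain ⟨A, hA, hlower⟩ := (analysisOp 𝕜 μ u).exists_pos_mul_norm_le_of_injective hinj
    refine ⟨A ^ 2, ‖analysisOp 𝕜 μ u‖ ^ 2 + 1, by positivity, by positivity, fun v => ⟨?_, ?_⟩⟩
    · rw [← mul_pow]
      exact pow_le_pow_left₀ (by positivity) (hlower v) 2
    · calc ‖analysisOp 𝕜 μ u v‖ ^ 2 ≤ (‖analysisOp 𝕜 μ u‖ * ‖v‖) ^ 2 :=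
            pow_le_pow_left₀ (norm_nonneg _) ((analysisOp 𝕜 μ u).le_opNorm v) 2
        _ ≤ (‖analysisOp 𝕜 μ u‖ ^ 2 + 1) * ‖v‖ ^ 2 := by nlinarith [sq_nonneg ‖v‖]

/-- For the standard basis `b`, `analysisOp 𝕜 μ u ∘ b` is the family of components of `u`. -/
theorem isContinuousFrame_iff_linearIndependent [FiniteDimensional 𝕜 E] {ι : Type*}
    [Fintype ι] (b : Basis ι 𝕜 E) (u : Lp E 2 μ) :
    IsContinuousFrame 𝕜 u ↔ LinearIndependent 𝕜 (analysisOp 𝕜 μ u ∘ b) :=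
  (isContinuousFrame_iff_injective u).trans
    ((analysisOp 𝕜 μ u).toLinearMap.injective_iff_linearIndependent_comp b)

theorem joinedIn_setOf_isContinuousFrame [FiniteDimensional 𝕜 E] {ι : Type*} [Fintype ι]
    (b : Basis ι 𝕜 E) {u a : Lp E 2 μ} (hu : IsContinuousFrame 𝕜 u) (ha : IsContinuousFrame 𝕜 a)
    (hua : Disjoint (span 𝕜 (range (analysisOp 𝕜 μ u ∘ b)))
      (span 𝕜 (range (analysisOp 𝕜 μ a ∘ b)))) :
    JoinedIn {w | IsContinuousFrame 𝕜 w} u a := by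
  rw [isContinuousFrame_iff_linearIndependent b] at hu ha
  refine joinedIn_of_forall_ofReal_smul_add_mem (𝕜 := 𝕜) fun t _ => ?_
  have hcoeff : ((1 - t : ℝ) : 𝕜) ≠ 0 ∨ ((t : ℝ) : 𝕜) ≠ 0 := by
    rcases eq_or_ne t 0 with rfl | ht
    · simp
    · exact .inr (RCLike.ofReal_ne_zero.mpr ht)
  rw [mem_ofPred_eq, isContinuousFrame_iff_linearIndependent b]
  simpa [Function.comp_def] using hu.smul_add_smul ha hua hcoeff

theorem isPathConnected_setOf_isContinuousFrame [FiniteDimensional 𝕜 E]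
    (hdim : ((3 * finrank 𝕜 E : ℕ) : Cardinal) ≤ Module.rank 𝕜 (Lp 𝕜 2 μ)) :
    IsPathConnected {u : Lp E 2 μ | IsContinuousFrame 𝕜 u} := by
  set b := stdOrthonormalBasis 𝕜 E
  set n := finrank 𝕜 E
  have exists_frame_disjoint (W : Submodule 𝕜 (Lp 𝕜 2 μ)) (hW : Module.rank 𝕜 W ≤ (2 * n : ℕ)) :
      ∃ a, IsContinuousFrame 𝕜 a ∧ Disjoint (span 𝕜 (range (analysisOp 𝕜 μ a ∘ b.toBasis))) W := by
    obtain ⟨h, hli, hW⟩ := exists_linearIndependent_disjoint (n := n) hW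
      (by rwa [show 2 * n + n = 3 * n by ring])
    obtain ⟨a, ha⟩ := exists_analysisOp_comp_eq b h
    rw [← b.coe_toBasis] at ha
    subst ha
    exact ⟨a, (isContinuousFrame_iff_linearIndependent b.toBasis a).mpr hli, hW⟩
  refine isPathConnected_iff.mpr ⟨?_, fun u hu v hv => ?_⟩
  · obtain ⟨a, ha, -⟩ := exists_frame_disjoint ⊥ (by simp)
    exact ⟨a, ha⟩
  obtain ⟨a, ha, hW⟩ := exists_frame_disjoint
    (span 𝕜 (range (analysisOp 𝕜 μ u ∘ b.toBasis)) ⊔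
      span 𝕜 (range (analysisOp 𝕜 μ v ∘ b.toBasis)))
    (((rank_add_le_rank_add_rank _ _).trans
      (add_le_add (rank_span_range_le _) (rank_span_range_le _))).trans (by simp [two_mul]))
  exact (joinedIn_setOf_isContinuousFrame b.toBasis hu ha (hW.symm.mono_left le_sup_left)).trans
    (joinedIn_setOf_isContinuousFrame b.toBasis hv ha (hW.symm.mono_left le_sup_right)).symm

end ContinuousFrame

theorem stmt16 {𝕜 X : Type*} [RCLike 𝕜] [MeasurableSpace X] (μ : Measure X) (n : ℕ)
    (hdim : ((3 * n : ℕ) : Cardinal) ≤ Module.rank 𝕜 (Lp 𝕜 2 μ)) :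
    IsPathConnected {u : Lp (EuclideanSpace 𝕜 (Fin n)) 2 μ |
      ∃ A B : ℝ, 0 < A ∧ 0 < B ∧ ∀ v : EuclideanSpace 𝕜 (Fin n),
        A * ‖v‖ ^ 2 ≤ ∫ x, ‖(inner 𝕜 v (u x) : 𝕜)‖ ^ 2 ∂μ ∧
        ∫ x, ‖(inner 𝕜 v (u x) : 𝕜)‖ ^ 2 ∂μ ≤ B * ‖v‖ ^ 2} :=
  isPathConnected_setOf_isContinuousFrame (by rwa [finrank_euclideanSpace_fin])
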